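/- Let m ≥ 1 be a natural number and let t₁, t₂ be fixed real numbers. Define ψ₁(x) = ∑_{k=0}^∞ 1/(x+k)² for x > 0, τ(ν) = m + ν + 2, and for ν > 4: B(ν) = νm/τ(ν); A(ν) = (ν²/((ν−2)(ν−4)))(2t₂ + t₁²); C(ν) = (2m/(τ(ν)ν) + 1)·A(ν) − ((ν+2)/(ν−2))·t₁²; D(ν) = −( (2m/ν)·(τ(ν)+2)/(τ(ν)(τ(ν)−2)) + ψ₁((ν+m)/2) − ψ₁(ν/2) ); B₁₁(ν) = −2νm t₁/((ν−2)τ(ν)); B₁₂(ν) = −m/((τ(ν)−2)τ(ν)); C₁₁(ν) = m t₁/((ν−2)(τ(ν)−2)τ(ν)). Set Δ(ν) = B(ν)C(ν)D(ν) + 16(B₁₁(ν)C₁₁(ν)B₁₂(ν) − B(ν)C₁₁(ν)²) − 8B₁₂(ν)²C(ν) − (1/2)B₁₁(ν)²D(ν). Then Δ(ν) = O(ν^{-3}) as ν → +∞. -/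

import Mathlib

/-!
ψ₁(x) is compared with the telescoping series of g(a) = 1/a + 1/(2a²): the defect
1/a² − (g(a) − g(a+1)) = 1/(2a²(a+1)²) is nonnegative and at most (1/(2x²))(1/a − 1/(a+1)) for
a ≥ x, so ψ₁(x) = 1/x + 1/(2x²) + O(x⁻³). Substituting this at x = (ν+m)/2 and x = ν/2, the
leading terms of D cancel against its rational part and D = O(ν⁻³). The other coefficients are
rational in ν: B and C are bounded, B₁₁ = O(ν⁻¹), B₁₂ = O(ν⁻²), C₁₁ = O(ν⁻³), and every monomial
of Δ is then O(ν⁻³).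
-/

open Filter Asymptotics

/-- The trigamma function, defined by its convergent series for x > 0. -/
noncomputable def psi1 (x : ℝ) : ℝ := ∑' k : ℕ, 1 / (x + k) ^ 2

/-- The quantity Δ(ν) inside the square root of the reference prior of Theorem 1,
with m = n − p, t₁ = tr Φ and t₂ = tr Φ² held fixed. -/
noncomputable def Δfun (m : ℕ) (t₁ t₂ : ℝ) (ν : ℝ) : ℝ :=
  let τ : ℝ := (m : ℝ) + ν + 2
  let B : ℝ := ν * m / τ
  let A : ℝ := ν ^ 2 / ((ν - 2) * (ν - 4)) * (2 * t₂ + t₁ ^ 2)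
  let C : ℝ := (2 * m / (τ * ν) + 1) * A - (ν + 2) / (ν - 2) * t₁ ^ 2
  let D : ℝ := -(2 * m / ν * (τ + 2) / (τ * (τ - 2)) +
    psi1 ((ν + m) / 2) - psi1 (ν / 2))
  let B11 : ℝ := -(2 * ν * m * t₁) / ((ν - 2) * τ)
  let B12 : ℝ := -(m : ℝ) / ((τ - 2) * τ)
  let C11 : ℝ := m * t₁ / ((ν - 2) * (τ - 2) * τ)
  B * C * D + 16 * (B11 * C11 * B12 - B * C11 ^ 2) - 8 * B12 ^ 2 * C -
    1 / 2 * B11 ^ 2 * D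

open Topology

theorem hasSum_sub_succ_of_antitone {g : ℕ → ℝ} (hg : Antitone g)
    (hlim : Tendsto g atTop (𝓝 0)) : HasSum (fun k => g k - g (k + 1)) (g 0) := by
  rw [hasSum_iff_tendsto_nat_of_nonneg fun k => sub_nonneg.2 (hg k.le_succ)]
  simp_rw [Finset.sum_range_sub']
  simpa using tendsto_const_nhds.sub hlim

theorem hasSum_sub_add_one_of_antitoneOn {φ : ℝ → ℝ} {x : ℝ} (hx : 0 < x)
    (hφ : AntitoneOn φ (Set.Ioi 0)) (hlim : Tendsto φ atTop (𝓝 0)) :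
    HasSum (fun k : ℕ => φ (x + k) - φ (x + k + 1)) (φ x) := by
  have hg : Antitone fun k : ℕ => φ (x + k) := fun k l hkl =>
    hφ (by positivity : 0 < x + k) (by positivity : 0 < x + l) (by gcongr)
  simpa [add_assoc] using hasSum_sub_succ_of_antitone hg
    (hlim.comp (tendsto_atTop_add_const_left _ x tendsto_natCast_atTop_atTop))

theorem one_div_sq_eq_sub_add {a : ℝ} (ha : 0 < a) :
    1 / a ^ 2 = (1 / a + 1 / (2 * a ^ 2)) - (1 / (a + 1) + 1 / (2 * (a + 1) ^ 2))
      + 1 / (2 * a ^ 2 * (a + 1) ^ 2) := by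
  have : a + 1 ≠ 0 := by positivity
  field_simp
  ring

theorem one_div_sq_mul_sq_le {x a : ℝ} (hx : 0 < x) (hxa : x ≤ a) :
    1 / (2 * a ^ 2 * (a + 1) ^ 2) ≤ 1 / (2 * x ^ 2) * (1 / a - 1 / (a + 1)) := by
  have ha : 0 < a := hx.trans_le hxa
  have : a + 1 ≠ 0 := by positivity
  rw [show 1 / (2 * x ^ 2) * (1 / a - 1 / (a + 1)) = 1 / (2 * x ^ 2 * (a * (a + 1))) by
      field_simp; ring,
    show 2 * a ^ 2 * (a + 1) ^ 2 = 2 * (a * (a + 1)) * (a * (a + 1)) by ring]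
  gcongr 1 / (2 * ?_ * _)
  nlinarith

noncomputable def trigammaRemainder (x : ℝ) : ℝ := psi1 x - (1 / x + 1 / (2 * x ^ 2))

theorem trigammaRemainder_nonneg_and_le {x : ℝ} (hx : 0 < x) :
    0 ≤ trigammaRemainder x ∧ trigammaRemainder x ≤ 1 / (2 * x ^ 3) := by
  have ha : ∀ k : ℕ, 0 < x + k := fun k => by positivity
  have hlim_inv : Tendsto (fun a : ℝ => 1 / a) atTop (𝓝 0) :=
    tendsto_const_nhds.div_atTop tendsto_id
  have hlim_inv_sq : Tendsto (fun a : ℝ => 1 / (2 * a ^ 2)) atTop (𝓝 0) :=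
    tendsto_const_nhds.div_atTop ((tendsto_pow_atTop two_ne_zero).const_mul_atTop two_pos)
  have hsum_g := hasSum_sub_add_one_of_antitoneOn hx
    (φ := fun a => 1 / a + 1 / (2 * a ^ 2)) (fun a (ha : 0 < a) b _ hab => by dsimp only; gcongr)
    (by simpa using hlim_inv.add hlim_inv_sq)
  have hsum_h := (hasSum_sub_add_one_of_antitoneOn hx (φ := fun a => 1 / a)
    (fun a (ha : 0 < a) b _ hab => by dsimp only; gcongr) hlim_inv).mul_left (1 / (2 * x ^ 2))
  set defect : ℕ → ℝ := fun k => 1 / (2 * (x + k) ^ 2 * (x + k + 1) ^ 2)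
  have hdefect_le : ∀ k : ℕ, defect k ≤ 1 / (2 * x ^ 2) * (1 / (x + k) - 1 / (x + k + 1)) :=
    fun k => one_div_sq_mul_sq_le hx (by simp)
  have hdefect_nonneg : ∀ k, 0 ≤ defect k := fun k => by
    have := ha k
    positivity
  have hs := hsum_h.summable.of_nonneg_of_le hdefect_nonneg hdefect_le
  have hsum_defect : HasSum defect (trigammaRemainder x) := by
    have hsum : HasSum (fun k : ℕ => 1 / (x + k) ^ 2)
        (1 / x + 1 / (2 * x ^ 2) + ∑' k, defect k) := by
      convert hsum_g.add hs.hasSum using 1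
      funext k
      exact one_div_sq_eq_sub_add (ha k)
    rw [trigammaRemainder, psi1, hsum.tsum_eq, add_sub_cancel_left]
    exact hs.hasSum
  refine ⟨hsum_defect.nonneg hdefect_nonneg,
    (hasSum_le hdefect_le hsum_defect hsum_h).trans_eq ?_⟩
  field_simp

/- Orders of decay are measured against powers of `x⁻¹` rather than `x ^ (-k : ℤ)`, so that
multiplying two estimates adds the exponents with no side condition `x ≠ 0`. -/

theorem Asymptotics.IsBigO.mul_inv_pow {l : Filter ℝ} {f g : ℝ → ℝ} {a b : ℕ}
    (hf : f =O[l] fun x => x⁻¹ ^ a) (hg : g =O[l] fun x => x⁻¹ ^ b) :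
    (fun x => f x * g x) =O[l] fun x => x⁻¹ ^ (a + b) := by
  simpa only [pow_add] using hf.mul hg

theorem Asymptotics.IsBigO.pow_inv_pow {l : Filter ℝ} {f : ℝ → ℝ} {a : ℕ}
    (hf : f =O[l] fun x => x⁻¹ ^ a) (n : ℕ) :
    (fun x => f x ^ n) =O[l] fun x => x⁻¹ ^ (a * n) := by
  simpa only [pow_mul] using hf.pow n

theorem isBigO_inv_pow_of_le {a b : ℕ} (h : b ≤ a) :
    (fun x : ℝ => x⁻¹ ^ a) =O[atTop] fun x => x⁻¹ ^ b := by
  refine IsBigO.of_bound 1 ((eventually_ge_atTop 1).mono fun x hx => ?_)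
  rw [Real.norm_of_nonneg (by positivity), Real.norm_of_nonneg (by positivity), one_mul]
  exact pow_le_pow_of_le_one (by positivity) (inv_le_one_of_one_le₀ hx) h

theorem isEquivalent_add_const (c : ℝ) : (fun x : ℝ => x + c) ~[atTop] id :=
  IsEquivalent.refl.add_isLittleO (isLittleO_const_id_atTop c)

theorem isBigO_inv_add_const (c : ℝ) :
    (fun x : ℝ => (x + c)⁻¹) =O[atTop] fun x => x⁻¹ ^ 1 :=
  (isEquivalent_add_const c).inv.isBigO.congr_right fun _ => (pow_one _).symm

theorem isBigO_add_div_add_const (a b : ℝ) :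
    (fun x : ℝ => (x + a) / (x + b)) =O[atTop] fun x => x⁻¹ ^ 0 := by
  refine ((isEquivalent_add_const a).div (isEquivalent_add_const b)).isBigO.trans
    (EventuallyEq.isBigO ?_)
  filter_upwards [eventually_ne_atTop 0] with x hx
  simp [hx]

theorem trigammaRemainder_isBigO : trigammaRemainder =O[atTop] fun x => x⁻¹ ^ 3 := by
  refine IsBigO.of_bound (1 / 2) ((eventually_gt_atTop 0).mono fun x hx => ?_)
  obtain ⟨h0, hle⟩ := trigammaRemainder_nonneg_and_le hx
  rw [Real.norm_of_nonneg h0, Real.norm_of_nonneg (by positivity)]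
  exact hle.trans_eq (by field_simp)

theorem trigammaRemainder_comp_isBigO (c : ℝ) :
    (fun ν => trigammaRemainder ((ν + c) / 2)) =O[atTop] fun ν => ν⁻¹ ^ 3 := by
  have hlim : Tendsto (fun ν : ℝ => (ν + c) / 2) atTop atTop :=
    (tendsto_atTop_add_const_right _ c tendsto_id).atTop_div_const two_pos
  have hinv : (fun ν : ℝ => ((ν + c) / 2)⁻¹) =O[atTop] fun ν => ν⁻¹ ^ 1 :=
    ((isBigO_inv_add_const c).const_mul_left 2).congr_left fun ν => by
      simp only [div_eq_mul_inv, mul_inv, inv_inv]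
      ring
  exact (trigammaRemainder_isBigO.comp_tendsto hlim).trans (hinv.pow_inv_pow 3)

namespace Δfun

variable (m : ℕ) (t₁ t₂ : ℝ)

noncomputable def τ (ν : ℝ) : ℝ := (m : ℝ) + ν + 2

noncomputable def B (ν : ℝ) : ℝ := ν * m / τ m ν

noncomputable def A (ν : ℝ) : ℝ := ν ^ 2 / ((ν - 2) * (ν - 4)) * (2 * t₂ + t₁ ^ 2)

noncomputable def C (ν : ℝ) : ℝ :=
  (2 * m / (τ m ν * ν) + 1) * A t₁ t₂ ν - (ν + 2) / (ν - 2) * t₁ ^ 2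

noncomputable def D (ν : ℝ) : ℝ :=
  -(2 * m / ν * (τ m ν + 2) / (τ m ν * (τ m ν - 2)) + psi1 ((ν + m) / 2) - psi1 (ν / 2))

noncomputable def B₁₁ (ν : ℝ) : ℝ := -(2 * ν * m * t₁) / ((ν - 2) * τ m ν)

noncomputable def B₁₂ (ν : ℝ) : ℝ := -(m : ℝ) / ((τ m ν - 2) * τ m ν)

noncomputable def C₁₁ (ν : ℝ) : ℝ := m * t₁ / ((ν - 2) * (τ m ν - 2) * τ m ν)

theorem eq_coeffs : Δfun m t₁ t₂ = fun ν =>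
    B m ν * C m t₁ t₂ ν * D m ν
      + 16 * (B₁₁ m t₁ ν * C₁₁ m t₁ ν * B₁₂ m ν - B m ν * C₁₁ m t₁ ν ^ 2)
      - 8 * B₁₂ m ν ^ 2 * C m t₁ t₂ ν - 1 / 2 * B₁₁ m t₁ ν ^ 2 * D m ν :=
  rfl

theorem B_isBigO : B m =O[atTop] fun ν => ν⁻¹ ^ 0 :=
  ((isBigO_add_div_add_const 0 (m + 2)).const_mul_left (m : ℝ)).congr_left fun ν => by
    simp only [B, τ]
    ring

theorem C_isBigO : C m t₁ t₂ =O[atTop] fun ν => ν⁻¹ ^ 0 := by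
  -- C = 2m(2t₂ + t₁²) τ⁻¹ν⁻¹ · a(ν) + (2t₂ + t₁²) a(ν) − t₁² (ν + 2)/(ν − 2),
  -- with a(ν) = ν/(ν − 2) · ν/(ν − 4).
  have hA := (isBigO_add_div_add_const 0 (-2)).mul_inv_pow (isBigO_add_div_add_const 0 (-4))
  have hcorr :=
    ((isBigO_inv_add_const (m + 2)).mul_inv_pow (isBigO_inv_add_const 0)).mul_inv_pow hA
  have h := ((hcorr.trans (isBigO_inv_pow_of_le (Nat.zero_le _))).const_mul_left
      (2 * m * (2 * t₂ + t₁ ^ 2))).add (hA.const_mul_left (2 * t₂ + t₁ ^ 2))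
    |>.sub ((isBigO_add_div_add_const 2 (-2)).const_mul_left (t₁ ^ 2))
  refine h.congr_left fun ν => ?_
  simp only [C, A, τ, div_eq_mul_inv, mul_inv]
  ring

theorem B₁₁_isBigO : B₁₁ m t₁ =O[atTop] fun ν => ν⁻¹ ^ 1 :=
  (((isBigO_add_div_add_const 0 (-2)).mul_inv_pow (isBigO_inv_add_const (m + 2))).const_mul_left
    (-2 * m * t₁)).congr_left fun ν => by
    simp only [B₁₁, τ, div_eq_mul_inv, mul_inv]
    ring

theorem B₁₂_isBigO : B₁₂ m =O[atTop] fun ν => ν⁻¹ ^ 2 :=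
  (((isBigO_inv_add_const m).mul_inv_pow (isBigO_inv_add_const (m + 2))).const_mul_left
    (-m : ℝ)).congr_left fun ν => by
    simp only [B₁₂, τ, div_eq_mul_inv, mul_inv]
    ring

theorem C₁₁_isBigO : C₁₁ m t₁ =O[atTop] fun ν => ν⁻¹ ^ 3 :=
  ((((isBigO_inv_add_const (-2)).mul_inv_pow (isBigO_inv_add_const m)).mul_inv_pow
    (isBigO_inv_add_const (m + 2))).const_mul_left (m * t₁)).congr_left fun ν => by
    simp only [C₁₁, τ, div_eq_mul_inv, mul_inv]
    ring

theorem D_eq {ν : ℝ} (hν : 0 < ν) : D m ν =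
    -(4 * m * (ν⁻¹ * (ν + m)⁻¹ * (ν + (m + 2))⁻¹)
      - 2 * m * (ν⁻¹ * (ν + m)⁻¹ ^ 2 + ν⁻¹ ^ 2 * (ν + m)⁻¹)
      + trigammaRemainder ((ν + m) / 2) - trigammaRemainder (ν / 2)) := by
  have hτ : (m : ℝ) + ν + 2 - 2 = ν + m := by ring
  have : (0 : ℝ) < ν + m := by positivity
  simp only [D, τ, trigammaRemainder, hτ]
  field_simp
  ring

theorem D_isBigO : D m =O[atTop] fun ν => ν⁻¹ ^ 3 := by
  have hinv : (fun ν : ℝ => ν⁻¹) =O[atTop] fun ν => ν⁻¹ ^ 1 := by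
    simpa using isBigO_inv_add_const 0
  have hs := isBigO_inv_add_const m
  have hrational :=
    (((hinv.mul_inv_pow hs).mul_inv_pow (isBigO_inv_add_const (m + 2))).const_mul_left
      (4 * m)).sub (((hinv.mul_inv_pow (hs.pow_inv_pow 2)).add
        ((hinv.pow_inv_pow 2).mul_inv_pow hs)).const_mul_left (2 * m))
  have h := (hrational.add (trigammaRemainder_comp_isBigO m)).sub
    (by simpa using trigammaRemainder_comp_isBigO 0)
  refine h.neg_left.congr' ?_ EventuallyEq.rfl
  filter_upwards [eventually_gt_atTop 0] with ν hν
  rw [D_eq m hν]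

end Δfun

open Δfun in
theorem stmt15_general (m : ℕ) (t₁ t₂ : ℝ) :
    (Δfun m t₁ t₂) =O[atTop] fun ν : ℝ => ν ^ (-3 : ℝ) := by
  have hB := B_isBigO m
  have hC := C_isBigO m t₁ t₂
  have hD := D_isBigO m
  have hB₁₁ := B₁₁_isBigO m t₁
  have hB₁₂ := B₁₂_isBigO m
  have hC₁₁ := C₁₁_isBigO m t₁
  have h₁ : (fun ν => B m ν * C m t₁ t₂ ν * D m ν) =O[atTop] fun ν => ν⁻¹ ^ 3 :=
    (hB.mul_inv_pow hC).mul_inv_pow hD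
  have h₂ : (fun ν => B₁₁ m t₁ ν * C₁₁ m t₁ ν * B₁₂ m ν) =O[atTop] fun ν => ν⁻¹ ^ 3 :=
    ((hB₁₁.mul_inv_pow hC₁₁).mul_inv_pow hB₁₂).trans (isBigO_inv_pow_of_le (by norm_num))
  have h₃ : (fun ν => B m ν * C₁₁ m t₁ ν ^ 2) =O[atTop] fun ν => ν⁻¹ ^ 3 :=
    (hB.mul_inv_pow (hC₁₁.pow_inv_pow 2)).trans (isBigO_inv_pow_of_le (by norm_num))
  have h₄ : (fun ν => B₁₂ m ν ^ 2 * C m t₁ t₂ ν) =O[atTop] fun ν => ν⁻¹ ^ 3 :=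
    ((hB₁₂.pow_inv_pow 2).mul_inv_pow hC).trans (isBigO_inv_pow_of_le (by norm_num))
  have h₅ : (fun ν => B₁₁ m t₁ ν ^ 2 * D m ν) =O[atTop] fun ν => ν⁻¹ ^ 3 :=
    ((hB₁₁.pow_inv_pow 2).mul_inv_pow hD).trans (isBigO_inv_pow_of_le (by norm_num))
  have h := ((h₁.add ((h₂.sub h₃).const_mul_left 16)).sub (h₄.const_mul_left 8)).sub
    (h₅.const_mul_left (1 / 2))
  rw [eq_coeffs]
  refine (h.congr_left fun ν => by ring).trans_eventuallyEq ?_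
  filter_upwards [eventually_gt_atTop 0] with ν hν
  rw [Real.rpow_neg hν.le, inv_pow]
  norm_cast

/-- Lemma 1 of the paper (ν-asymptotics): Δ(ν) = O(ν^{-3}) as ν → ∞. -/
theorem stmt15 (m : ℕ) (hm : 1 ≤ m) (t₁ t₂ : ℝ) :
    (Δfun m t₁ t₂) =O[atTop] fun ν : ℝ => ν ^ (-3 : ℝ) :=
  stmt15_general m t₁ t₂
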